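/- arXiv:2203.10037 — 9 statements merged into one kernel-verified Lean document; each statement's English description precedes it below -/
import Mathlib

section
/- Let v : Fin N → ℝ with mean v̄ and suppose v is 'mean partitioned' in reverse: there is m ∈ Fin N such that v i ≥ v̄ for i ≤ m and v i < v̄ for i > m (i.e., -v is mean partitioned). Then ∑_{j=1}^{N} j * (v̄ - v j) ≥ ∑_{i=1}^{N} (v̄ - v i)₊. (In words: the overall resampling rate of stratified resampling with mean partition dominates that of systematic resampling with mean partition.) -/
open Finset

/-- The overall resampling rate of stratified resampling with mean partition
dominates that of systematic resampling with mean partition. -/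
theorem stmt1 (N : ℕ) (hN : 1 ≤ N) (v : Fin N → ℝ) (vbar : ℝ)
    (hvbar : vbar = (∑ j, v j) / N) (m : Fin N)
    (h1 : ∀ i, i ≤ m → vbar ≤ v i) (h2 : ∀ i, m < i → v i < vbar) :
    ∑ i, max (vbar - v i) 0 ≤ ∑ j : Fin N, (((j : ℕ) : ℝ) + 1) * (vbar - v j) := by
  have hN0 : (N : ℝ) ≠ 0 := by positivity
  have hsum : ∑ j, (vbar - v j) = 0 := by
    rw [Finset.sum_sub_distrib, Finset.sum_const, Finset.card_univ, Fintype.card_fin, hvbar]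
    rw [nsmul_eq_mul]
    field_simp
    ring
  have key : ∀ j : Fin N,
      max (vbar - v j) 0 + (((m : ℕ) : ℝ) + 1) * (vbar - v j)
        ≤ (((j : ℕ) : ℝ) + 1) * (vbar - v j) := by
    intro j
    rcases le_or_gt j m with h | h
    · have hd : vbar - v j ≤ 0 := by have := h1 j h; linarith
      rw [max_eq_right hd]
      have hj : ((j : ℕ) : ℝ) ≤ ((m : ℕ) : ℝ) := by exact_mod_cast Fin.le_def.mp h
      nlinarith
    · have hd : 0 ≤ vbar - v j := by have := h2 j h; linarith
      rw [max_eq_left hd]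
      have hj : ((m : ℕ) : ℝ) + 1 ≤ ((j : ℕ) : ℝ) := by
        exact_mod_cast Nat.succ_le_of_lt (Fin.lt_def.mp h)
      nlinarith
  calc ∑ i, max (vbar - v i) 0
      = ∑ i, (max (vbar - v i) 0 + (((m : ℕ) : ℝ) + 1) * (vbar - v i)) := by
        rw [Finset.sum_add_distrib, ← Finset.mul_sum, hsum, mul_zero, add_zero]
    _ ≤ ∑ j : Fin N, (((j : ℕ) : ℝ) + 1) * (vbar - v j) :=
        Finset.sum_le_sum fun j _ => key j
end

section
/- Let ε : Fin N → ℝ satisfy ∑ᵢ ε i = 0, ∑ᵢ |ε i| < 2, and suppose there exists m such that ε i ≤ 0 for i ≤ m and ε i > 0 for i > m. Define c 0 = 0 and c i = -∑_{j ≤ i} ε j. Then c is nondecreasing on {0,...,m}, strictly decreasing on {m,...,N} (with c N = 0), and c i ∈ [0,1) for all i ∈ {1,...,m} (in fact for all i). -/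
/-- Monotonicity properties of the partial sums `c` under the
nearly-constant mean-partitioned weights assumption. -/
theorem stmt6 (N : ℕ) (hN : 1 ≤ N) (ε : Fin N → ℝ)
    (hsum : ∑ i, ε i = 0) (habs : ∑ i, |ε i| < 2)
    (m : ℕ) (hm1 : 1 ≤ m) (hmN : m ≤ N)
    (hpart1 : ∀ i : Fin N, (i : ℕ) < m → ε i ≤ 0)
    (hpart2 : ∀ i : Fin N, m ≤ (i : ℕ) → 0 < ε i)
    (c : ℕ → ℝ)
    (hc : ∀ i, c i = -∑ j ∈ Finset.univ.filter (fun j : Fin N => (j : ℕ) < i), ε j) :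
    (∀ i j, i ≤ j → j ≤ m → c i ≤ c j) ∧
    (∀ i j, m ≤ i → i < j → j ≤ N → c j < c i) ∧
    c N = 0 ∧
    (∀ i, i ≤ N → 0 ≤ c i ∧ c i < 1) := by
  -- step lemma
  have hstep : ∀ i (h : i < N), c (i + 1) = c i - ε ⟨i, h⟩ := by
    intro i h
    rw [hc, hc]
    have hset : Finset.univ.filter (fun j : Fin N => (j : ℕ) < i + 1)
        = insert ⟨i, h⟩ (Finset.univ.filter (fun j : Fin N => (j : ℕ) < i)) := by
      ext j
      simp [Nat.lt_succ_iff_lt_or_eq, Fin.ext_iff, or_comm, Nat.le_iff_lt_or_eq]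
    rw [hset, Finset.sum_insert (by simp)]
    ring
  have hc0 : c 0 = 0 := by simp [hc]
  have hcN : c N = 0 := by
    rw [hc]
    have : Finset.univ.filter (fun j : Fin N => (j : ℕ) < N) = Finset.univ := by
      ext j; simp [j.isLt]
    rw [this, hsum]; norm_num
  -- monotone on [0,m]
  have hmono : ∀ i j, i ≤ j → j ≤ m → c i ≤ c j := by
    intro i j hij hjm
    induction j with
    | zero => simp_all
    | succ k ih =>
      rcases Nat.lt_succ_iff_lt_or_eq.mp (Nat.lt_succ_of_le hij) with h | h
      · have hk : k < N := lt_of_lt_of_le hjm hmN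
        have : c i ≤ c k := ih (Nat.lt_succ_iff.mp h) (le_of_lt hjm)
        have hstep' := hstep k hk
        have := hpart1 ⟨k, hk⟩ (by simpa using hjm)
        linarith
      · subst h; rfl
  -- strictly decreasing on [m,N]
  have hdec : ∀ i j, m ≤ i → i < j → j ≤ N → c j < c i := by
    intro i j hmi hij hjN
    induction j with
    | zero => omega
    | succ k ih =>
      have hk : k < N := hjN
      have hstep' := hstep k hk
      have hpos := hpart2 ⟨k, hk⟩ (by simp; omega)
      rcases Nat.lt_succ_iff_lt_or_eq.mp hij with h | h
      · have := ih h (le_of_lt hjN)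
        linarith
      · subst h; linarith
  -- c m = half of sum |ε|
  have hcm2 : c m + c m = ∑ i, |ε i| := by
    have hsplit := Finset.sum_filter_add_sum_filter_not Finset.univ
      (fun j : Fin N => (j : ℕ) < m) ε
    have hsplit2 := Finset.sum_filter_add_sum_filter_not Finset.univ
      (fun j : Fin N => (j : ℕ) < m) (fun i => |ε i|)
    have h1 : ∑ j ∈ Finset.univ.filter (fun j : Fin N => (j : ℕ) < m), |ε j|
        = -∑ j ∈ Finset.univ.filter (fun j : Fin N => (j : ℕ) < m), ε j := by
      rw [← Finset.sum_neg_distrib]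
      apply Finset.sum_congr rfl
      intro j hj
      simp only [Finset.mem_filter] at hj
      exact abs_of_nonpos (hpart1 j hj.2)
    have h2 : ∑ j ∈ Finset.univ.filter (fun j : Fin N => ¬ (j : ℕ) < m), |ε j|
        = ∑ j ∈ Finset.univ.filter (fun j : Fin N => ¬ (j : ℕ) < m), ε j := by
      apply Finset.sum_congr rfl
      intro j hj
      simp only [Finset.mem_filter] at hj
      exact abs_of_pos (hpart2 j (by omega))
    rw [hc m]
    rw [hsum] at hsplit
    linarith [hsplit, hsplit2, h1, h2]
  have hcm1 : c m < 1 := by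
    have : ∑ i, |ε i| < 2 := habs
    linarith
  refine ⟨hmono, hdec, hcN, ?_⟩
  intro i hiN
  constructor
  · rcases le_or_gt i m with h | h
    · have := hmono 0 i (Nat.zero_le _) h
      linarith
    · rcases eq_or_lt_of_le hiN with h2 | h2
      · rw [h2, hcN]
      · have := hdec i N (le_of_lt h) h2 le_rfl
        rw [hcN] at this; linarith
  · rcases le_or_gt i m with h | h
    · have := hmono i m h le_rfl
      linarith
    · have := hdec m i le_rfl h hiN
      linarith
end

section
/- Under the nearly-constant mean-partitioned weights assumption, stratified resampling produces indices A i ∈ {i, i+1} for all i, and for any subset K ⊆ {1,...,N-1} with complement S = {1,...,N} \ K, the probability that A j = j for all j ∈ S and A i = i + 1 for all i ∈ K equals (∏_{j ∈ S} (1 - c j)) * (∏_{i ∈ K} c i). -/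
lemma aux_c (N : ℕ) (ε : Fin N → ℝ)
    (hsum : ∑ i, ε i = 0) (habs : ∑ i, |ε i| < 2)
    (m : ℕ)
    (hpart1 : ∀ i : Fin N, (i : ℕ) < m → ε i ≤ 0)
    (hpart2 : ∀ i : Fin N, m ≤ (i : ℕ) → 0 < ε i)
    (c : ℕ → ℝ)
    (hc : ∀ i, c i = -∑ j ∈ Finset.univ.filter (fun j : Fin N => (j : ℕ) < i), ε j) :
    (∀ n, 0 ≤ c n) ∧ (∀ n, c n < 1) := by
  set P := Finset.univ.filter (fun j : Fin N => (j : ℕ) < m) with hP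
  have hPsum : ∑ j ∈ P, |ε j| < 1 := by
    have h1 : ∑ j ∈ P, |ε j| = -∑ j ∈ P, ε j := by
      rw [← Finset.sum_neg_distrib]
      refine Finset.sum_congr rfl fun j hj => ?_
      rw [hP, Finset.mem_filter] at hj
      exact abs_of_nonpos (hpart1 j hj.2)
    have h2 : ∑ j ∈ Pᶜ, |ε j| = ∑ j ∈ Pᶜ, ε j := by
      refine Finset.sum_congr rfl fun j hj => ?_
      rw [Finset.mem_compl, hP, Finset.mem_filter] at hj
      exact abs_of_pos (hpart2 j (by push_neg at hj; exact hj (Finset.mem_univ j)))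
    have h3 : ∑ j ∈ P, ε j + ∑ j ∈ Pᶜ, ε j = 0 := by
      rw [Finset.sum_add_sum_compl, hsum]
    have h4 : ∑ j ∈ P, |ε j| + ∑ j ∈ Pᶜ, |ε j| < 2 := by
      rw [Finset.sum_add_sum_compl]; exact habs
    rw [h1, h2] at h4; linarith
  constructor
  · intro n
    rcases le_or_gt n m with h | h
    · rw [hc n, neg_nonneg]
      refine Finset.sum_nonpos fun j hj => ?_
      rw [Finset.mem_filter] at hj
      exact hpart1 j (lt_of_lt_of_le hj.2 h)
    · rw [hc n]
      have : ∑ j ∈ Finset.univ.filter (fun j : Fin N => (j : ℕ) < n), ε j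
          + ∑ j ∈ (Finset.univ.filter (fun j : Fin N => (j : ℕ) < n))ᶜ, ε j = 0 := by
        rw [Finset.sum_add_sum_compl, hsum]
      have hge : 0 ≤ ∑ j ∈ (Finset.univ.filter (fun j : Fin N => (j : ℕ) < n))ᶜ, ε j := by
        refine Finset.sum_nonneg fun j hj => ?_
        rw [Finset.mem_compl, Finset.mem_filter] at hj
        push_neg at hj
        exact (hpart2 j (le_trans h.le (hj (Finset.mem_univ j)))).le
      linarith
  · intro n
    set Q := Finset.univ.filter (fun j : Fin N => (j : ℕ) < n) with hQ
    have key : c n = ∑ j ∈ Q ∩ P, (-ε j) + ∑ j ∈ Q \ P, (-ε j) := by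
      rw [hc n, ← Finset.sum_neg_distrib, Finset.sum_inter_add_sum_sdiff]
    have h5 : ∑ j ∈ Q \ P, (-ε j) ≤ 0 := by
      refine Finset.sum_nonpos fun j hj => ?_
      rw [Finset.mem_sdiff] at hj
      have : m ≤ (j:ℕ) := by
        by_contra hlt
        exact hj.2 (by rw [hP, Finset.mem_filter]; exact ⟨Finset.mem_univ j, by omega⟩)
      simp only [neg_nonpos]
      exact (hpart2 j this).le
    have h6 : ∑ j ∈ Q ∩ P, (-ε j) ≤ ∑ j ∈ P, |ε j| := by
      calc ∑ j ∈ Q ∩ P, (-ε j) ≤ ∑ j ∈ Q ∩ P, |ε j| := by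
            refine Finset.sum_le_sum fun j _ => neg_le_abs _
        _ ≤ ∑ j ∈ P, |ε j| := by
            refine Finset.sum_le_sum_of_subset_of_nonneg (Finset.inter_subset_right)
              fun j _ _ => abs_nonneg _
    linarith

lemma aux_card (N n : ℕ) :
    (Finset.univ.filter fun j : Fin N => (j:ℕ) < n).card = min n N := by
  rcases lt_or_ge n N with h | h
  · have : (Finset.univ.filter fun j : Fin N => (j:ℕ) < n) = Finset.Iio ⟨n, h⟩ := by
      ext j; simp [Fin.lt_def]
    rw [this, Fin.card_Iio, min_eq_left h.le]
  · have : (Finset.univ.filter fun j : Fin N => (j:ℕ) < n) = Finset.univ := by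
      ext j; simp [lt_of_lt_of_le j.isLt h]
    rw [this, Finset.card_univ, Fintype.card_fin, min_eq_right h]

lemma aux_F (N : ℕ) (hN : 0 < N) (ε : Fin N → ℝ)
    (w : Fin N → ℝ) (hw : ∀ i, w i = (1 + ε i) / N)
    (F : ℕ → ℝ)
    (hF : ∀ i, F i = ∑ j ∈ Finset.univ.filter (fun j : Fin N => (j : ℕ) < i), w j)
    (c : ℕ → ℝ)
    (hc : ∀ i, c i = -∑ j ∈ Finset.univ.filter (fun j : Fin N => (j : ℕ) < i), ε j) :
    ∀ n, F n = ((min n N : ℕ) - c n) / N := by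
  intro n
  have hN' : (N : ℝ) ≠ 0 := Nat.cast_ne_zero.mpr hN.ne'
  rw [hF n, hc n]
  have : ∀ j ∈ Finset.univ.filter (fun j : Fin N => (j : ℕ) < n),
      w j = (1 + ε j) / N := fun j _ => hw j
  rw [Finset.sum_congr rfl this, ← Finset.sum_div, Finset.sum_add_distrib,
    Finset.sum_const, ← aux_card N n]
  ring

lemma aux_Finv (N : ℕ) (hN : 0 < N) (F : ℕ → ℝ) (c : ℕ → ℝ)
    (hc0 : ∀ n, 0 ≤ c n) (hc1 : ∀ n, c n < 1) (hcN : c N = 0)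
    (hFeq : ∀ n, F n = ((min n N : ℕ) - c n) / N)
    (Finv : ℝ → ℕ) (hFinv : ∀ u, Finv u = sInf {i : ℕ | u ≤ F i}) :
    ∀ (i : ℕ) (u : ℝ), i < N → 0 < u → u < 1 →
      Finv (((i : ℕ) + u) / N) = if u ≤ 1 - c (i+1) then i+1 else i+2 := by
  intro i u hiN hu0 hu1
  have hNpos : (0:ℝ) < N := Nat.cast_pos.mpr hN
  have hmem : ∀ n : ℕ, ((i:ℝ) + u) / N ≤ F n ↔ (i:ℝ) + u ≤ (min n N : ℕ) - c n := by
    intro n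
    rw [hFeq n, div_le_div_iff_of_pos_right hNpos]
  have hnotmem : ∀ n : ℕ, n ≤ i → ¬ (((i:ℝ) + u) / N ≤ F n) := by
    intro n hn
    rw [hmem]
    push_neg
    have h1 : ((min n N : ℕ) : ℝ) ≤ (n : ℝ) := Nat.cast_le.mpr (min_le_left _ _)
    have h2 : ((n : ℕ) : ℝ) ≤ (i : ℝ) := Nat.cast_le.mpr hn
    have := hc0 n
    linarith
  rw [hFinv]
  split_ifs with hcase
  · have hmem1 : ((i:ℝ) + u) / N ≤ F (i+1) := by
      rw [hmem, min_eq_left hiN]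
      push_cast
      linarith
    refine le_antisymm (Nat.sInf_le hmem1) ?_
    by_contra hlt
    push_neg at hlt
    have hsmem := Nat.sInf_mem (⟨i+1, hmem1⟩ : Set.Nonempty {n : ℕ | ((i:ℝ) + u) / N ≤ F n})
    exact hnotmem _ (by omega) hsmem
  · push_neg at hcase
    have hi1N : i + 1 < N := by
      by_contra h
      have : i + 1 = N := by omega
      rw [this, hcN] at hcase
      linarith
    have hmem2 : ((i:ℝ) + u) / N ≤ F (i+2) := by
      rw [hmem, min_eq_left hi1N]
      have := hc1 (i+2)
      push_cast
      linarith
    refine le_antisymm (Nat.sInf_le hmem2) ?_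
    by_contra hlt
    push_neg at hlt
    have hsmem := Nat.sInf_mem (⟨i+2, hmem2⟩ : Set.Nonempty {n : ℕ | ((i:ℝ) + u) / N ≤ F n})
    rcases Nat.lt_succ_iff_lt_or_eq.mp hlt with h | h
    · exact hnotmem _ (by omega) hsmem
    · rw [h] at hsmem
      rw [Set.mem_setOf_eq] at hsmem
      rw [hmem, min_eq_left hiN] at hsmem
      push_cast at hsmem
      linarith

open MeasureTheory

/-- Stratified resampling probabilities under the nearly-constant
mean-partitioned weights assumption (indices are 1-based, index `i : Fin N`
has 1-based label `i + 1`). -/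
theorem stmt8 (N : ℕ) (hN : 2 ≤ N) (ε : Fin N → ℝ)
    (hsum : ∑ i, ε i = 0) (habs : ∑ i, |ε i| < 2)
    (m : ℕ) (hm1 : 1 ≤ m) (hmN : m ≤ N)
    (hpart1 : ∀ i : Fin N, (i : ℕ) < m → ε i ≤ 0)
    (hpart2 : ∀ i : Fin N, m ≤ (i : ℕ) → 0 < ε i)
    (w : Fin N → ℝ) (hw : ∀ i, w i = (1 + ε i) / N)
    (F : ℕ → ℝ)
    (hF : ∀ i, F i = ∑ j ∈ Finset.univ.filter (fun j : Fin N => (j : ℕ) < i), w j)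
    (c : ℕ → ℝ)
    (hc : ∀ i, c i = -∑ j ∈ Finset.univ.filter (fun j : Fin N => (j : ℕ) < i), ε j)
    (Finv : ℝ → ℕ) (hFinv : ∀ u, Finv u = sInf {i : ℕ | u ≤ F i})
    (μ : Measure (Fin N → ℝ))
    (hμ : μ = Measure.pi fun _ : Fin N => volume.restrict (Set.Ioo (0 : ℝ) 1))
    (A : (Fin N → ℝ) → Fin N → ℕ)
    (hA : ∀ U i, A U i = Finv (((i : ℕ) + U i) / N)) :
    (μ {U | ∀ i : Fin N, A U i = (i : ℕ) + 1 ∨ A U i = (i : ℕ) + 2} = 1) ∧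
    ∀ K : Finset (Fin N), (∀ i ∈ K, (i : ℕ) + 1 < N) →
      μ {U | (∀ j ∈ Kᶜ, A U j = (j : ℕ) + 1) ∧ ∀ i ∈ K, A U i = (i : ℕ) + 2} =
        ENNReal.ofReal
          ((∏ j ∈ Kᶜ, (1 - c ((j : ℕ) + 1))) * ∏ i ∈ K, c ((i : ℕ) + 1)) := by
  have hN0 : 0 < N := by omega
  obtain ⟨hc0, hc1⟩ := aux_c N ε hsum habs m hpart1 hpart2 c hc
  have hcN : c N = 0 := by
    rw [hc N]
    have : (Finset.univ.filter fun j : Fin N => (j:ℕ) < N) = Finset.univ := by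
      ext j; simp [j.isLt]
    rw [this, hsum, neg_zero]
  have hFeq := aux_F N hN0 ε w hw F hF c hc
  have hFI := aux_Finv N hN0 F c hc0 hc1 hcN hFeq Finv hFinv
  -- full-measure box
  set T : Set (Fin N → ℝ) := Set.pi Set.univ (fun _ => Set.Ioo 0 1) with hT
  have hTmeas : MeasurableSet T := MeasurableSet.univ_pi fun _ => measurableSet_Ioo
  have hμT : μ T = 1 := by
    rw [hμ, hT, Measure.pi_pi]
    simp [Measure.restrict_apply, Real.volume_Ioo]
  have hμuniv : μ Set.univ = 1 := by
    rw [hμ, Measure.pi_univ]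
    simp [Measure.restrict_apply, Real.volume_Ioo]
  have hμTc : μ Tᶜ = 0 := by
    rw [measure_compl hTmeas (by rw [hμT]; exact ENNReal.one_ne_top), hμT, hμuniv,
      tsub_self]
  -- pointwise characterization on T
  have hAchar : ∀ U ∈ T, ∀ i : Fin N,
      A U i = if U i ≤ 1 - c ((i:ℕ)+1) then (i:ℕ)+1 else (i:ℕ)+2 := by
    intro U hU i
    have hUi : U i ∈ Set.Ioo (0:ℝ) 1 := hU i (Set.mem_univ i)
    rw [hA]
    exact hFI i (U i) i.isLt hUi.1 hUi.2
  constructor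
  · -- part 1
    have hsub : T ⊆ {U | ∀ i : Fin N, A U i = (i:ℕ) + 1 ∨ A U i = (i:ℕ) + 2} := by
      intro U hU i
      rw [hAchar U hU i]
      split_ifs
      · exact Or.inl rfl
      · exact Or.inr rfl
    refine le_antisymm ?_ ?_
    · calc μ _ ≤ μ Set.univ := measure_mono (Set.subset_univ _)
        _ = 1 := hμuniv
    · calc (1:ENNReal) = μ T := hμT.symm
        _ ≤ _ := measure_mono hsub
  · -- part 2
    intro K hK
    set E : Set (Fin N → ℝ) :=
      {U | (∀ j ∈ Kᶜ, A U j = (j:ℕ) + 1) ∧ ∀ i ∈ K, A U i = (i:ℕ) + 2} with hE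
    set s : Fin N → Set ℝ := fun i =>
      Set.Ioo (0:ℝ) 1 ∩ (if i ∈ K then Set.Ioi (1 - c ((i:ℕ)+1))
        else Set.Iic (1 - c ((i:ℕ)+1))) with hs
    have hsmeas : ∀ i, MeasurableSet (s i) := by
      intro i
      rw [hs]
      dsimp only
      split_ifs
      · exact measurableSet_Ioo.inter measurableSet_Ioi
      · exact measurableSet_Ioo.inter measurableSet_Iic
    have hET : E ∩ T = Set.pi Set.univ s := by
      ext U
      constructor
      · rintro ⟨⟨h1, h2⟩, hUT⟩ i _
        have hUi : U i ∈ Set.Ioo (0:ℝ) 1 := hUT i (Set.mem_univ i)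
        rw [hs]
        refine ⟨hUi, ?_⟩
        by_cases hiK : i ∈ K
        · rw [if_pos hiK]
          have hAi := h2 i hiK
          rw [hAchar U hUT i] at hAi
          by_contra hle
          rw [Set.mem_Ioi, not_lt] at hle
          rw [if_pos hle] at hAi
          omega
        · rw [if_neg hiK]
          have hAi := h1 i (Finset.mem_compl.mpr hiK)
          rw [hAchar U hUT i] at hAi
          by_contra hle
          rw [Set.mem_Iic] at hle
          rw [if_neg hle] at hAi
          omega
      · intro hU
        have hUT : U ∈ T := by
          intro i _
          exact ((by simpa [hs] using hU i (Set.mem_univ i)) : _ ∧ _).1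
        refine ⟨⟨?_, ?_⟩, hUT⟩
        · intro j hj
          have hj' : j ∉ K := Finset.mem_compl.mp hj
          have := hU j (Set.mem_univ j)
          rw [hs] at this
          simp only [if_neg hj'] at this
          rw [hAchar U hUT j, if_pos (Set.mem_Iic.mp this.2)]
        · intro i hi
          have := hU i (Set.mem_univ i)
          rw [hs] at this
          simp only [if_pos hi] at this
          rw [hAchar U hUT i, if_neg (not_le.mpr (Set.mem_Ioi.mp this.2))]
    have hμE : μ E = μ (E ∩ T) := by
      refine le_antisymm ?_ (measure_mono Set.inter_subset_left)
      calc μ E ≤ μ ((E ∩ T) ∪ Tᶜ) := by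
            refine measure_mono fun U hU => ?_
            by_cases h : U ∈ T
            · exact Or.inl ⟨hU, h⟩
            · exact Or.inr h
        _ ≤ μ (E ∩ T) + μ Tᶜ := measure_union_le _ _
        _ = μ (E ∩ T) := by rw [hμTc, add_zero]
    have hvol : ∀ i : Fin N, volume (s i ∩ Set.Ioo (0:ℝ) 1)
        = ENNReal.ofReal (if i ∈ K then c ((i:ℕ)+1) else 1 - c ((i:ℕ)+1)) := by
      intro i
      have h0 := hc0 ((i:ℕ)+1)
      have h1 := hc1 ((i:ℕ)+1)
      have hsi : s i ∩ Set.Ioo (0:ℝ) 1 = s i := by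
        rw [hs]
        exact Set.inter_eq_left.mpr Set.inter_subset_left
      rw [hsi, hs]
      dsimp only
      by_cases hiK : i ∈ K
      · rw [if_pos hiK, if_pos hiK]
        have : Set.Ioo (0:ℝ) 1 ∩ Set.Ioi (1 - c ((i:ℕ)+1)) = Set.Ioo (1 - c ((i:ℕ)+1)) 1 := by
          ext u
          simp only [Set.mem_inter_iff, Set.mem_Ioo, Set.mem_Ioi]
          constructor
          · rintro ⟨⟨_, hu1⟩, hu2⟩; exact ⟨hu2, hu1⟩
          · rintro ⟨hu1, hu2⟩; exact ⟨⟨by linarith, hu2⟩, hu1⟩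
        rw [this, Real.volume_Ioo]
        congr 1
        ring
      · rw [if_neg hiK, if_neg hiK]
        rcases eq_or_lt_of_le h0 with h00 | h00
        · have heq : Set.Ioo (0:ℝ) 1 ∩ Set.Iic (1 - c ((i:ℕ)+1)) = Set.Ioo 0 1 := by
            refine Set.inter_eq_left.mpr fun u hu => ?_
            simp only [Set.mem_Iic, ← h00, sub_zero]
            exact le_of_lt hu.2
          rw [heq, Real.volume_Ioo, ← h00]
        · have : Set.Ioo (0:ℝ) 1 ∩ Set.Iic (1 - c ((i:ℕ)+1)) = Set.Ioc 0 (1 - c ((i:ℕ)+1)) := by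
            ext u
            simp only [Set.mem_inter_iff, Set.mem_Ioo, Set.mem_Ioc, Set.mem_Iic]
            constructor
            · rintro ⟨⟨hu0, _⟩, hu2⟩; exact ⟨hu0, hu2⟩
            · rintro ⟨hu0, hu2⟩; exact ⟨⟨hu0, by linarith⟩, hu2⟩
          rw [this, Real.volume_Ioc]
          congr 1
          ring
    rw [hμE, hET, hμ, Measure.pi_pi]
    have : ∀ i : Fin N, (volume.restrict (Set.Ioo (0:ℝ) 1)) (s i)
        = ENNReal.ofReal (if i ∈ K then c ((i:ℕ)+1) else 1 - c ((i:ℕ)+1)) := by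
      intro i
      rw [Measure.restrict_apply (hsmeas i), hvol i]
    rw [Finset.prod_congr rfl fun i _ => this i]
    rw [← ENNReal.ofReal_prod_of_nonneg]
    · congr 1
      rw [← Finset.prod_compl_mul_prod K]
      congr 1
      · exact Finset.prod_congr rfl fun j hj => by
          rw [if_neg (Finset.mem_compl.mp hj)]
      · exact Finset.prod_congr rfl fun i hi => by rw [if_pos hi]
    · intro i _
      have h0 := hc0 ((i:ℕ)+1)
      have h1 := hc1 ((i:ℕ)+1)
      split_ifs
      · exact h0
      · linarith
end

section
/- Under the nearly-constant mean-partitioned weights assumption, systematic resampling with a single uniform U satisfies: for k ∈ {1,...,m} and ℓ ∈ {m+1,...,N}, the probability that A i = i for i < k and i ≥ ℓ, and A j = j + 1 for k ≤ j < ℓ, equals (min(c k, c (ℓ-1)) - max(c (k-1), c ℓ))₊; and the probability of no resampling (A = identity) equals 1 - c m. These events exhaust all outcomes. -/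
open MeasureTheory

/-- Systematic resampling probabilities under the nearly-constant
mean-partitioned weights assumption (indices are 1-based, index `i : Fin N`
has 1-based label `i + 1`). -/
theorem stmt9 (N : ℕ) (hN : 2 ≤ N) (ε : Fin N → ℝ)
    (hsum : ∑ i, ε i = 0) (habs : ∑ i, |ε i| < 2)
    (m : ℕ) (hm1 : 1 ≤ m) (hmN : m ≤ N)
    (hpart1 : ∀ i : Fin N, (i : ℕ) < m → ε i ≤ 0)
    (hpart2 : ∀ i : Fin N, m ≤ (i : ℕ) → 0 < ε i)
    (w : Fin N → ℝ) (hw : ∀ i, w i = (1 + ε i) / N)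
    (F : ℕ → ℝ)
    (hF : ∀ i, F i = ∑ j ∈ Finset.univ.filter (fun j : Fin N => (j : ℕ) < i), w j)
    (c : ℕ → ℝ)
    (hc : ∀ i, c i = -∑ j ∈ Finset.univ.filter (fun j : Fin N => (j : ℕ) < i), ε j)
    (Finv : ℝ → ℕ) (hFinv : ∀ u, Finv u = sInf {i : ℕ | u ≤ F i})
    (μ : Measure ℝ) (hμ : μ = volume.restrict (Set.Ioo (0 : ℝ) 1))
    (A : ℝ → Fin N → ℕ) (hA : ∀ u i, A u i = Finv (((i : ℕ) + u) / N)) :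
    (∀ k l : ℕ, 1 ≤ k → k ≤ m → m + 1 ≤ l → l ≤ N →
      μ {u | (∀ i : Fin N, ((i : ℕ) + 1 < k ∨ l ≤ (i : ℕ) + 1) → A u i = (i : ℕ) + 1) ∧
             (∀ i : Fin N, k ≤ (i : ℕ) + 1 → (i : ℕ) + 1 < l → A u i = (i : ℕ) + 2)} =
        ENNReal.ofReal (max (min (c k) (c (l - 1)) - max (c (k - 1)) (c l)) 0)) ∧
    (μ {u | ∀ i : Fin N, A u i = (i : ℕ) + 1} = ENNReal.ofReal (1 - c m)) ∧
    (∀ᵐ u ∂μ, (∀ i : Fin N, A u i = (i : ℕ) + 1) ∨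
      ∃ k l : ℕ, 1 ≤ k ∧ k ≤ m ∧ m + 1 ≤ l ∧ l ≤ N ∧
        (∀ i : Fin N, ((i : ℕ) + 1 < k ∨ l ≤ (i : ℕ) + 1) → A u i = (i : ℕ) + 1) ∧
        (∀ i : Fin N, k ≤ (i : ℕ) + 1 → (i : ℕ) + 1 < l → A u i = (i : ℕ) + 2)) := by
  have hN0 : (0:ℝ) < N := by positivity
  -- filter splitting
  have hfilt : ∀ (i:ℕ) (h : i < N),
      Finset.univ.filter (fun j : Fin N => (j : ℕ) < i+1)
        = insert ⟨i,h⟩ (Finset.univ.filter (fun j : Fin N => (j : ℕ) < i)) := by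
    intro i h; ext j; simp [Nat.lt_succ_iff_lt_or_eq, Fin.ext_iff, or_comm]; constructor <;> intro h <;> omega
  have hnotmem : ∀ (i:ℕ) (h : i < N),
      (⟨i,h⟩ : Fin N) ∉ Finset.univ.filter (fun j : Fin N => (j : ℕ) < i) := by
    intro i h; simp
  have hc0 : c 0 = 0 := by simp [hc]
  have hcN : c N = 0 := by
    rw [hc]
    have : Finset.univ.filter (fun j : Fin N => (j : ℕ) < N) = Finset.univ := by
      ext j; simp [j.isLt]
    rw [this, hsum]; simp
  have hcsucc : ∀ (i:ℕ) (h : i < N), c (i+1) = c i - ε ⟨i,h⟩ := by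
    intro i h
    rw [hc, hc, hfilt i h, Finset.sum_insert (hnotmem i h)]
    ring
  have hFsucc : ∀ (i:ℕ) (h : i < N), F (i+1) = F i + (1 + ε ⟨i,h⟩)/N := by
    intro i h
    rw [hF, hF, hfilt i h, Finset.sum_insert (hnotmem i h), hw]
    ring
  -- monotonicity of c
  have hcup : ∀ i j : ℕ, i ≤ j → j ≤ m → c i ≤ c j := by
    intro i j hij hjm
    induction j with
    | zero =>
      have : i = 0 := by omega
      subst this; exact le_rfl
    | succ j ih =>
      rcases Nat.lt_or_ge i (j+1) with h1 | h1
      · have hjN : j < N := by omega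
        have := hcsucc j hjN
        have hε : ε ⟨j, hjN⟩ ≤ 0 := hpart1 _ (by simpa using by omega)
        have : c j ≤ c (j+1) := by rw [hcsucc j hjN]; linarith
        exact le_trans (ih (by omega) (by omega)) this
      · have : i = j + 1 := by omega
        subst this; rfl
  have hcdown : ∀ i j : ℕ, m ≤ i → i ≤ j → j ≤ N → c j ≤ c i := by
    intro i j hmi hij hjN
    induction j with
    | zero => have : i = 0 := by omega
              subst this; rfl
    | succ j ih =>
      rcases Nat.lt_or_ge i (j+1) with h1 | h1
      · have hjN' : j < N := by omega
        have hε : 0 < ε ⟨j, hjN'⟩ := hpart2 _ (by simpa using by omega)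
        have h2 : c (j+1) ≤ c j := by rw [hcsucc j hjN']; linarith
        exact le_trans h2 (ih (by omega) (by omega))
      · have : i = j + 1 := by omega
        subst this; rfl
  have hcnn : ∀ i : ℕ, i ≤ N → 0 ≤ c i := by
    intro i hiN
    rcases le_or_gt i m with h | h
    · have := hcup 0 i (Nat.zero_le _) h; rw [hc0] at this; exact this
    · have := hcdown i N (by omega) (by omega) le_rfl; rw [hcN] at this; exact this
  have hcmax : ∀ i : ℕ, i ≤ N → c i ≤ c m := by
    intro i hiN
    rcases le_or_gt i m with h | h
    · exact hcup i m h le_rfl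
    · exact hcdown m i le_rfl (by omega) hiN
  have hcm1 : c m < 1 := by
    have hsplit := Finset.sum_filter_add_sum_filter_not Finset.univ (fun j : Fin N => (j:ℕ) < m) (fun j => |ε j|)
    have hsplit2 := Finset.sum_filter_add_sum_filter_not Finset.univ (fun j : Fin N => (j:ℕ) < m) ε
    have e1 : ∑ j ∈ Finset.univ.filter (fun j : Fin N => ¬(j:ℕ) < m), |ε j|
        = ∑ j ∈ Finset.univ.filter (fun j : Fin N => ¬(j:ℕ) < m), ε j :=
      Finset.sum_congr rfl (fun j hj => abs_of_pos (hpart2 j (by simpa [not_lt] using (Finset.mem_filter.mp hj).2)))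
    have e0 : ∑ j ∈ Finset.univ.filter (fun j : Fin N => (j:ℕ) < m), |ε j|
        = ∑ j ∈ Finset.univ.filter (fun j : Fin N => (j:ℕ) < m), (-ε j) :=
      Finset.sum_congr rfl (fun j hj => abs_of_nonpos (hpart1 j (by simpa using (Finset.mem_filter.mp hj).2)))
    rw [Finset.sum_neg_distrib] at e0
    have hcm := hc m
    simp only [hsum] at hsplit2
    linarith
  -- F closed form and monotonicity
  have hF' : ∀ i : ℕ, i ≤ N → F i = (i - c i)/N := by
    intro i hiN
    induction i with
    | zero => simp [hF, hc0]
    | succ i ih =>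
      rw [hFsucc i (by omega), ih (by omega), hcsucc i (by omega)]
      push_cast
      field_simp
      ring
  have hF0 : F 0 = 0 := by simp [hF]
  have hFN : F N = 1 := by
    rw [hF' N le_rfl, hcN]; field_simp; simp
  have hFmono : ∀ i j : ℕ, i ≤ j → j ≤ N → F i ≤ F j := by
    intro i j hij hjN
    induction j with
    | zero => have : i = 0 := by omega
              subst this; rfl
    | succ j ih =>
      rcases Nat.lt_or_ge i (j+1) with h1 | h1
      · have hjN' : j < N := by omega
        have hε : -1 < ε ⟨j, hjN'⟩ := by
          rcases le_or_gt m j with h | h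
          · linarith [hpart2 ⟨j,hjN'⟩ h]
          · have h1 := hcsucc j hjN'
            have h2 := hcmax (j+1) (by omega)
            have h3 := hcnn j (by omega)
            linarith
        have h2 : F j ≤ F (j+1) := by
          rw [hFsucc j hjN']
          have : 0 < (1 + ε ⟨j, hjN'⟩)/N := by
            apply div_pos (by linarith) hN0
          linarith
        exact le_trans (ih (by omega) (by omega)) h2
      · have : i = j + 1 := by omega
        subst this; rfl
  -- Finv characterization
  have hFinv_iff : ∀ v : ℝ, v ≤ 1 → ∀ j : ℕ, 1 ≤ j → j ≤ N →
      (Finv v = j ↔ (F (j-1) < v ∧ v ≤ F j)) := by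
    intro v hv1 j hj1 hjN
    have hne : {i : ℕ | v ≤ F i}.Nonempty := ⟨N, by simp [hFN, hv1]⟩
    constructor
    · intro h
      have hmem : j ∈ {i : ℕ | v ≤ F i} := by
        rw [← h, hFinv]; exact Nat.sInf_mem hne
      refine ⟨?_, hmem⟩
      by_contra hcon
      push_neg at hcon
      have : Finv v ≤ j - 1 := by rw [hFinv]; exact Nat.sInf_le hcon
      omega
    · rintro ⟨h1, h2⟩
      rw [hFinv]
      refine le_antisymm (Nat.sInf_le h2) ?_
      by_contra hcon
      push_neg at hcon
      have hmem := Nat.sInf_mem hne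
      have hle : sInf {i : ℕ | v ≤ F i} ≤ j - 1 := by omega
      have : F (sInf {i : ℕ | v ≤ F i}) ≤ F (j-1) := hFmono _ _ hle (by omega)
      have : v ≤ F (j-1) := le_trans hmem this
      linarith
  -- characterization of A u i = i+1 / i+2
  have hA1 : ∀ u : ℝ, u ∈ Set.Ioo (0:ℝ) 1 → ∀ i : Fin N,
      (A u i = (i:ℕ) + 1 ↔ u ≤ 1 - c ((i:ℕ)+1)) := by
    intro u hu i
    obtain ⟨hu0, hu1⟩ := hu
    have hiN := i.isLt
    rw [hA]
    have hv1 : ((i:ℕ) + u)/N ≤ 1 := by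
      rw [div_le_one hN0]
      have : ((i:ℕ):ℝ) + 1 ≤ N := by exact_mod_cast hiN
      linarith
    rw [hFinv_iff _ hv1 ((i:ℕ)+1) (by omega) (by omega)]
    have e1 : (i:ℕ) + 1 - 1 = (i:ℕ) := by omega
    rw [e1, hF' i (by omega), hF' ((i:ℕ)+1) (by omega)]
    have hci : 0 ≤ c i := hcnn i (by omega)
    constructor
    · rintro ⟨_, h2⟩
      rw [div_le_div_iff_of_pos_right hN0] at h2
      push_cast at h2
      linarith
    · intro h
      constructor
      · rw [div_lt_div_iff_of_pos_right hN0]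
        push_cast
        linarith
      · rw [div_le_div_iff_of_pos_right hN0]
        push_cast
        linarith
  -- A u i = i + 2 characterization
  have hA2 : ∀ u : ℝ, u ∈ Set.Ioo (0:ℝ) 1 → ∀ i : Fin N, (i:ℕ)+2 ≤ N →
      (A u i = (i:ℕ) + 2 ↔ 1 - c ((i:ℕ)+1) < u) := by
    intro u hu i hi2
    obtain ⟨hu0, hu1⟩ := hu
    rw [hA]
    have hv1 : ((i:ℕ) + u)/N ≤ 1 := by
      rw [div_le_one hN0]
      have : ((i:ℕ):ℝ) + 1 ≤ N := by exact_mod_cast i.isLt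
      linarith
    rw [hFinv_iff _ hv1 ((i:ℕ)+2) (by omega) hi2]
    have e1 : (i:ℕ) + 2 - 1 = (i:ℕ) + 1 := by omega
    rw [e1, hF' ((i:ℕ)+1) (by omega), hF' ((i:ℕ)+2) (by omega)]
    have hc2 : c ((i:ℕ)+2) ≤ c m := hcmax _ (by omega)
    constructor
    · rintro ⟨h1, _⟩
      rw [div_lt_div_iff_of_pos_right hN0] at h1
      push_cast at h1
      linarith
    · intro h
      constructor
      · rw [div_lt_div_iff_of_pos_right hN0]; push_cast; linarith
      · rw [div_le_div_iff_of_pos_right hN0]; push_cast; linarith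
  -- measure helpers
  have hrest : ∀ s : Set ℝ, μ s = volume (s ∩ Set.Ioo 0 1) := by
    intro s; rw [hμ, Measure.restrict_apply' measurableSet_Ioo]
  have hsand : ∀ (s : Set ℝ) (a b : ℝ), Set.Ioo a b ⊆ s → s ⊆ Set.Ioc a b →
      volume s = ENNReal.ofReal (b - a) := by
    intro s a b h1 h2
    refine le_antisymm ?_ ?_
    · calc volume s ≤ volume (Set.Ioc a b) := measure_mono h2
        _ = ENNReal.ofReal (b-a) := Real.volume_Ioc
    · calc ENNReal.ofReal (b-a) = volume (Set.Ioo a b) := Real.volume_Ioo.symm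
        _ ≤ volume s := measure_mono h1
  have hofmax : ∀ x : ℝ, ENNReal.ofReal (max x 0) = ENNReal.ofReal x := by
    intro x
    rcases le_total x 0 with h | h
    · rw [max_eq_right h, ENNReal.ofReal_zero, eq_comm, ENNReal.ofReal_eq_zero]; exact h
    · rw [max_eq_left h]
  have hcm0 : 0 ≤ c m := hcnn m hmN
  refine ⟨?_, ?_, ?_⟩
  · -- part 1
    intro k l hk1 hkm hml hlN
    set a := 1 - min (c k) (c (l-1)) with ha
    set b := 1 - max (c (k-1)) (c l) with hb
    rw [hrest, hofmax]
    have hba : min (c k) (c (l-1)) - max (c (k-1)) (c l) = b - a := by rw [ha, hb]; ring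
    rw [hba]
    have hck : c k ≤ c m := hcmax k (by omega)
    have hcl1 : c (l-1) ≤ c m := hcmax (l-1) (by omega)
    have ha0 : 0 < a := by
      have h1 : min (c k) (c (l-1)) ≤ c m := le_trans (min_le_left _ _) hck
      rw [ha]; linarith
    have hb1 : b ≤ 1 := by
      have h1 : 0 ≤ max (c (k-1)) (c l) := le_trans (hcnn l (by omega)) (le_max_right _ _)
      rw [hb]; linarith
    apply hsand _ a b
    · intro u hu
      obtain ⟨hua, hub⟩ := hu
      have hu0 : 0 < u := lt_trans ha0 hua
      have hu1 : u < 1 := lt_of_lt_of_le hub hb1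
      refine ⟨⟨fun i hi => ?_, fun i hik hil => ?_⟩, hu0, hu1⟩
      · have hiN := i.isLt
        rw [hA1 u ⟨hu0,hu1⟩ i]
        rcases hi with hlt | hge
        · have h1 : c ((i:ℕ)+1) ≤ c (k-1) := hcup _ _ (by omega) (by omega)
          have h2 := le_max_left (c (k-1)) (c l)
          rw [hb] at hub; linarith
        · have h1 : c ((i:ℕ)+1) ≤ c l := hcdown l _ (by omega) (by omega) (by omega)
          have h2 := le_max_right (c (k-1)) (c l)
          rw [hb] at hub; linarith
      · have hiN := i.isLt
        have hi2 : (i:ℕ)+2 ≤ N := by omega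
        rw [hA2 u ⟨hu0,hu1⟩ i hi2]
        rcases le_or_gt ((i:ℕ)+1) m with h | h
        · have h1 : c k ≤ c ((i:ℕ)+1) := hcup _ _ (by omega) h
          have h2 : min (c k) (c (l-1)) ≤ c ((i:ℕ)+1) := le_trans (min_le_left _ _) h1
          rw [ha] at hua; linarith
        · have h1 : c (l-1) ≤ c ((i:ℕ)+1) := hcdown _ _ (by omega) (by omega) (by omega)
          have h2 : min (c k) (c (l-1)) ≤ c ((i:ℕ)+1) := le_trans (min_le_right _ _) h1
          rw [ha] at hua; linarith
    · rintro u ⟨⟨hout, hin⟩, hu0, hu1⟩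
      have hioo : u ∈ Set.Ioo (0:ℝ) 1 := ⟨hu0, hu1⟩
      constructor
      · -- a < u
        have hik : k - 1 < N := by omega
        have h1 : 1 - c k < u := by
          have h := (hA2 u hioo ⟨k-1, hik⟩ (by show k-1+2 ≤ N; omega)).mp
            (hin ⟨k-1,hik⟩ (by show k ≤ k-1+1; omega) (by show k-1+1 < l; omega))
          rwa [show ((⟨k-1,hik⟩ : Fin N) : ℕ) + 1 = k by show k-1+1 = k; omega] at h
        have hil : l - 2 < N := by omega
        have h2 : 1 - c (l-1) < u := by
          have h := (hA2 u hioo ⟨l-2, hil⟩ (by show l-2+2 ≤ N; omega)).mp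
            (hin ⟨l-2,hil⟩ (by show k ≤ l-2+1; omega) (by show l-2+1 < l; omega))
          rwa [show ((⟨l-2,hil⟩ : Fin N) : ℕ) + 1 = l-1 by show l-2+1 = l-1; omega] at h
        rw [ha]
        rcases min_cases (c k) (c (l-1)) with ⟨he, _⟩ | ⟨he, _⟩ <;> rw [he] <;> linarith
      · -- u ≤ b
        have h1 : u ≤ 1 - c (k-1) := by
          rcases Nat.eq_or_lt_of_le hk1 with he | hlt
          · rw [← he, show (1:ℕ)-1 = 0 from rfl, hc0]; linarith
          · have hik : k - 2 < N := by omega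
            have h := (hA1 u hioo ⟨k-2, hik⟩).mp
              (hout ⟨k-2,hik⟩ (Or.inl (by show k-2+1 < k; omega)))
            rwa [show ((⟨k-2,hik⟩ : Fin N) : ℕ) + 1 = k-1 by show k-2+1 = k-1; omega] at h
        have h2 : u ≤ 1 - c l := by
          have hil : l - 1 < N := by omega
          have h := (hA1 u hioo ⟨l-1, hil⟩).mp
            (hout ⟨l-1,hil⟩ (Or.inr (by show l ≤ l-1+1; omega)))
          rwa [show ((⟨l-1,hil⟩ : Fin N) : ℕ) + 1 = l by show l-1+1 = l; omega] at h
        rw [hb]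
        have := max_le (show c (k-1) ≤ 1 - u by linarith) (show c l ≤ 1 - u by linarith)
        linarith
  · -- part 2
    rw [hrest, show ENNReal.ofReal (1 - c m) = ENNReal.ofReal (1 - c m - 0) by norm_num]
    apply hsand _ 0 (1 - c m)
    · intro u hu
      obtain ⟨h0, h1⟩ := hu
      have hu1 : u < 1 := by linarith
      refine ⟨fun i => ?_, h0, hu1⟩
      have hiN := i.isLt
      rw [hA1 u ⟨h0, hu1⟩ i]
      have := hcmax ((i:ℕ)+1) (by omega)
      linarith
    · rintro u ⟨hs, hu0, hu1⟩
      refine ⟨hu0, ?_⟩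
      have hi : m - 1 < N := by omega
      have h := (hA1 u ⟨hu0,hu1⟩ ⟨m-1, hi⟩).mp (by
        have := hs ⟨m-1, hi⟩
        rwa [show ((⟨m-1,hi⟩ : Fin N) : ℕ) + 1 = m-1+1 from rfl] at this)
      rwa [show ((⟨m-1,hi⟩ : Fin N) : ℕ) + 1 = m by show m-1+1 = m; omega] at h
  · -- part 3
    rw [hμ]
    filter_upwards [ae_restrict_mem measurableSet_Ioo] with u hu
    obtain ⟨hu0, hu1⟩ := hu
    have hioo : u ∈ Set.Ioo (0:ℝ) 1 := ⟨hu0, hu1⟩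
    classical
    set J := (Finset.Icc 1 N).filter (fun j => 1 - c j < u) with hJ
    by_cases hJne : J.Nonempty
    · right
      set M := J.max' hJne with hM
      set k := J.min' hJne with hk
      have hkJ : k ∈ J := J.min'_mem hJne
      have hMJ : M ∈ J := J.max'_mem hJne
      have hkIcc := Finset.mem_Icc.mp (Finset.mem_filter.mp hkJ).1
      have hMIcc := Finset.mem_Icc.mp (Finset.mem_filter.mp hMJ).1
      have hku : 1 - c k < u := (Finset.mem_filter.mp hkJ).2
      have hMu : 1 - c M < u := (Finset.mem_filter.mp hMJ).2
      have hmJ : m ∈ J := Finset.mem_filter.mpr ⟨Finset.mem_Icc.mpr ⟨hm1, hmN⟩, by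
        have := hcmax k (by omega); linarith⟩
      have hkm : k ≤ m := J.min'_le m hmJ
      have hmM : m ≤ M := J.le_max' m hmJ
      have hMN : M < N := by
        rcases Nat.lt_or_ge M N with h | h
        · exact h
        · exfalso
          have : M = N := by omega
          rw [this, hcN] at hMu; linarith
      refine ⟨k, M+1, by omega, hkm, by omega, by omega, ?_, ?_⟩
      · intro i hi
        rw [hA1 u hioo i]
        by_contra hcon
        push_neg at hcon
        have hiN := i.isLt
        have hmem : (i:ℕ)+1 ∈ J := Finset.mem_filter.mpr ⟨Finset.mem_Icc.mpr (by omega), hcon⟩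
        have h1 := J.min'_le _ hmem
        have h2 := J.le_max' _ hmem
        omega
      · intro i hik hil
        have hi2 : (i:ℕ)+2 ≤ N := by omega
        rw [hA2 u hioo i hi2]
        rcases le_or_gt ((i:ℕ)+1) m with h | h
        · have h1 : c k ≤ c ((i:ℕ)+1) := hcup _ _ (by omega) h
          linarith
        · have h1 : c M ≤ c ((i:ℕ)+1) := hcdown _ _ (by omega) (by omega) (by omega)
          linarith
    · left
      intro i
      rw [hA1 u hioo i]
      by_contra hcon
      push_neg at hcon
      have hiN := i.isLt
      exact hJne ⟨(i:ℕ)+1, Finset.mem_filter.mpr ⟨Finset.mem_Icc.mpr (by omega), hcon⟩⟩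
end

section
/- Let v : Fin N → ℝ be nonnegative, mean-partitioned in reverse (v i ≥ v̄ for i ≤ m, v i < v̄ for i > m), and let s 0 = 0, s i = ∑_{j≤i} (v j - v̄). Then ∑_{k=1}^{m} ∑_{ℓ=m+1}^{N} (min(s k, s (ℓ-1)) - max(s (k-1), s ℓ))₊ = s m = ∑_{i=1}^{N} (v i - v̄)₊. (The systematic resampling intensities sum to the overall rate.) -/
lemma clamp_eq (a b u w : ℝ) (hba : b ≤ a) (hwu : w ≤ u) :
    max (min a u - max b w) 0 = max b (min a u) - max b (min a w) := by
  rcases le_total a u with h1 | h1 <;> rcases le_total a w with h2 | h2 <;>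
    rcases le_total b u with h3 | h3 <;> rcases le_total b w with h4 | h4 <;>
    simp [min_def, max_def] <;> split_ifs <;> linarith

lemma tele (f : ℕ → ℝ) (m N : ℕ) (h : m ≤ N) :
    ∑ l ∈ Finset.Icc (m + 1) N, (f (l - 1) - f l) = f m - f N := by
  induction N, h using Nat.le_induction with
  | base => simp
  | succ n hn ih =>
    rw [Finset.sum_Icc_succ_top (by omega), ih]
    have : n + 1 - 1 = n := by omega
    rw [this]; ring

/-- The systematic resampling intensities sum to the overall rate. -/
theorem stmt10 (N : ℕ) (hN : 2 ≤ N) (v : Fin N → ℝ) (hv : ∀ i, 0 ≤ v i)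
    (vbar : ℝ) (hvbar : vbar = (∑ j, v j) / N)
    (m : ℕ) (hm1 : 1 ≤ m) (hmN : m ≤ N)
    (hp1 : ∀ i : Fin N, (i : ℕ) < m → vbar ≤ v i)
    (hp2 : ∀ i : Fin N, m ≤ (i : ℕ) → v i < vbar)
    (s : ℕ → ℝ)
    (hs : ∀ i, s i = ∑ j ∈ Finset.univ.filter (fun j : Fin N => (j : ℕ) < i),
      (v j - vbar)) :
    (∑ k ∈ Finset.Icc 1 m, ∑ l ∈ Finset.Icc (m + 1) N,
        max (min (s k) (s (l - 1)) - max (s (k - 1)) (s l)) 0 = s m) ∧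
    s m = ∑ i, max (v i - vbar) 0 := by
  have hs0 : s 0 = 0 := by rw [hs]; simp
  have hstep : ∀ i (h : i < N), s (i + 1) = s i + (v ⟨i, h⟩ - vbar) := by
    intro i h
    rw [hs, hs]
    have heq : Finset.univ.filter (fun j : Fin N => (j : ℕ) < i + 1)
        = insert ⟨i, h⟩ (Finset.univ.filter (fun j : Fin N => (j : ℕ) < i)) := by
      ext j; simp [Fin.ext_iff]; omega
    rw [heq, Finset.sum_insert (by simp)]
    ring
  have hsN : s N = 0 := by
    rw [hs]
    have heq : Finset.univ.filter (fun j : Fin N => (j : ℕ) < N) = Finset.univ := by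
      simp [Fin.is_lt]
    rw [heq, Finset.sum_sub_distrib]
    simp [hvbar]
    have hN0 : (N : ℝ) ≠ 0 := Nat.cast_ne_zero.mpr (by omega)
    field_simp
    ring
  have hinc : ∀ k, k < m → s k ≤ s (k + 1) := by
    intro k hk
    have hkN : k < N := lt_of_lt_of_le hk hmN
    rw [hstep k hkN]
    have := hp1 ⟨k, hkN⟩ hk
    simp at this ⊢
    linarith
  have hmono : ∀ j k, j ≤ k → k ≤ m → s j ≤ s k := by
    intro j k hjk hkm
    induction k with
    | zero =>
      have : j = 0 := by omega
      rw [this]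
    | succ n ih =>
      rcases Nat.lt_or_ge j (n + 1) with h | h
      · exact le_trans (ih (by omega) (by omega)) (hinc n (by omega))
      · have : j = n + 1 := by omega
        rw [this]
  have hdec : ∀ l, m ≤ l → l < N → s (l + 1) ≤ s l := by
    intro l hl hlN
    rw [hstep l hlN]
    have := hp2 ⟨l, hlN⟩ hl
    linarith
  have h2 : s m = ∑ i, max (v i - vbar) 0 := by
    rw [hs]
    rw [← Finset.sum_filter_add_sum_filter_not Finset.univ (fun j : Fin N => (j : ℕ) < m)
      (fun i => max (v i - vbar) 0)]
    have e1 : ∑ j ∈ Finset.univ.filter (fun j : Fin N => (j : ℕ) < m), (v j - vbar)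
        = ∑ j ∈ Finset.univ.filter (fun j : Fin N => (j : ℕ) < m), max (v j - vbar) 0 := by
      refine Finset.sum_congr rfl fun j hj => ?_
      simp only [Finset.mem_filter] at hj
      have := hp1 j hj.2
      rw [max_eq_left (by linarith)]
    have e2 : ∑ j ∈ Finset.univ.filter (fun j : Fin N => ¬ (j : ℕ) < m),
        max (v j - vbar) 0 = 0 := by
      refine Finset.sum_eq_zero fun j hj => ?_
      simp only [Finset.mem_filter] at hj
      have := hp2 j (by omega)
      rw [max_eq_right (by linarith)]
    rw [e1, e2, add_zero]
  refine ⟨?_, h2⟩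
  have key : ∀ k ∈ Finset.Icc 1 m, ∑ l ∈ Finset.Icc (m + 1) N,
      max (min (s k) (s (l - 1)) - max (s (k - 1)) (s l)) 0 = s k - s (k - 1) := by
    intro k hk
    simp only [Finset.mem_Icc] at hk
    have hba : s (k - 1) ≤ s k := hmono (k - 1) k (by omega) hk.2
    have hterm : ∀ l ∈ Finset.Icc (m + 1) N,
        max (min (s k) (s (l - 1)) - max (s (k - 1)) (s l)) 0
        = (max (s (k - 1)) (min (s k) (s (l - 1)))) - (max (s (k - 1)) (min (s k) (s l))) := by
      intro l hl
      simp only [Finset.mem_Icc] at hl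
      have hwu : s l ≤ s (l - 1) := by
        have : l - 1 + 1 = l := by omega
        rw [← this]
        exact hdec (l - 1) (by omega) (by omega)
      exact clamp_eq _ _ _ _ hba hwu
    rw [Finset.sum_congr rfl hterm,
      tele (fun l => max (s (k - 1)) (min (s k) (s l))) m N hmN]
    have h0k : 0 ≤ s k := by have := hmono 0 k (by omega) hk.2; linarith [hs0]
    have h0k1 : 0 ≤ s (k - 1) := by have := hmono 0 (k - 1) (by omega) (by omega); linarith [hs0]
    have hkm : s k ≤ s m := hmono k m hk.2 le_rfl
    rw [hsN]
    rw [min_eq_left hkm, max_eq_right hba, min_eq_right h0k, max_eq_left h0k1]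
  rw [Finset.sum_congr rfl key]
  have h3 : ∑ k ∈ Finset.Icc 1 m, (s k - s (k - 1))
      = - ∑ k ∈ Finset.Icc 1 m, (s (k - 1) - s k) := by
    rw [← Finset.sum_neg_distrib]
    exact Finset.sum_congr rfl fun l _ => by ring
  have h4 := tele s 0 m (by omega)
  simp only [zero_add] at h4
  rw [h3, h4, hs0]
  ring
end

section
/- The killing resampling intensity limit: for v : Fin N → [0,∞) and a configuration a where a i ≠ i for exactly one index i (and a j = j for j ≠ i, with a i arbitrary ≠ i), lim_{Δ→0⁺} (1/Δ) * r_killing(a | exp(-Δ v)) = (1/N)(v i - v_min), where v_min = min_j v j; for configurations differing from the identity in two or more coordinates the limit is 0; and the total over all non-identity configurations equals (N-1)(v̄ - v_min). -/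
open Filter Finset Real

private lemma expTendsto' (c : ℝ) :
    Tendsto (fun Δ : ℝ => Real.exp (-(Δ * c))) (nhds 0) (nhds 1) := by
  have h : Continuous fun Δ : ℝ => Real.exp (-(Δ * c)) := by continuity
  simpa using h.tendsto 0

private lemma slopeTendsto' (a b : ℝ) :
    Tendsto (fun Δ => (1 - Real.exp (-(Δ * a)) / Real.exp (-(Δ * b))) / Δ)
      (nhdsWithin 0 (Set.Ioi 0)) (nhds (a - b)) := by
  have hD : HasDerivAt (fun Δ : ℝ => 1 - Real.exp (Δ * (b - a))) (a - b) 0 := by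
    have h1 : HasDerivAt (fun Δ : ℝ => Δ * (b - a)) (b - a) 0 := by
      simpa using (hasDerivAt_id (0:ℝ)).mul_const (b - a)
    have h3 : HasDerivAt (fun x => 1 - Real.exp (x * (b - a))) (-(Real.exp (0 * (b - a)) * (b - a))) 0 :=
      (h1.exp).const_sub 1
    convert h3 using 1
    simp
  have hs := hasDerivAt_iff_tendsto_slope.mp hD
  have hs2 := hs.mono_left (nhdsWithin_mono 0 (fun x hx => by
    simpa using (ne_of_gt (Set.mem_Ioi.mp hx))))
  refine hs2.congr (fun Δ => ?_)
  have h4 : Real.exp (-(Δ * a)) / Real.exp (-(Δ * b)) = Real.exp (Δ * (b - a)) := by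
    rw [← Real.exp_sub]; ring_nf
  rw [slope_def_field, h4]
  simp

private noncomputable def Fk (N : ℕ) (v : Fin N → ℝ) (vmin : ℝ) (a : Fin N → Fin N) (i : Fin N)
    (Δ : ℝ) : ℝ :=
  (if a i = i then Real.exp (-(Δ * v i)) / Real.exp (-(Δ * vmin)) else 0) +
    (1 - Real.exp (-(Δ * v i)) / Real.exp (-(Δ * vmin))) *
      Real.exp (-(Δ * v (a i))) / ∑ l, Real.exp (-(Δ * v l))

private lemma sumTendsto (N : ℕ) (v : Fin N → ℝ) :
    Tendsto (fun Δ : ℝ => ∑ l, Real.exp (-(Δ * v l))) (nhdsWithin 0 (Set.Ioi 0))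
      (nhds (N:ℝ)) := by
  have h := tendsto_finset_sum (univ : Finset (Fin N)) (fun l _ => expTendsto' (v l))
  have h2 : (∑ _l : Fin N, (1:ℝ)) = (N:ℝ) := by simp
  rw [h2] at h
  exact h.mono_left nhdsWithin_le_nhds

private lemma Fk_lim (N : ℕ) (hN : 2 ≤ N) (v : Fin N → ℝ) (vmin : ℝ) (a : Fin N → Fin N)
    (i : Fin N) :
    Tendsto (Fk N v vmin a i) (nhdsWithin 0 (Set.Ioi 0))
      (nhds (if a i = i then 1 else 0)) := by
  have hNne : (N:ℝ) ≠ 0 := by positivity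
  have hE : ∀ c, Tendsto (fun Δ : ℝ => Real.exp (-(Δ * c))) (nhdsWithin 0 (Set.Ioi 0))
      (nhds 1) := fun c => (expTendsto' c).mono_left nhdsWithin_le_nhds
  have h1 := (hE (v i)).div (hE vmin) one_ne_zero
  have hc : Tendsto (fun _ : ℝ => (1:ℝ)) (nhdsWithin 0 (Set.Ioi 0)) (nhds 1) := tendsto_const_nhds
  have h2 := (((hc.sub h1).mul (hE (v (a i)))).div (sumTendsto N v) hNne)
  by_cases h : a i = i
  · rw [if_pos h]
    have := h1.add h2
    have he : (1:ℝ)/1 + ((1:ℝ) - 1/1) * 1 / N = 1 := by norm_num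
    rw [he] at this
    refine this.congr (fun Δ => ?_)
    simp [Fk, h]
  · have := (tendsto_const_nhds (x := (0:ℝ)) (f := nhdsWithin (0:ℝ) (Set.Ioi 0))).add h2
    have he : (0:ℝ) + ((1:ℝ) - 1/1) * 1 / N = 0 := by norm_num
    rw [he] at this
    rw [if_neg h]
    refine this.congr (fun Δ => ?_)
    simp [Fk, h]

private lemma Fk_div (N : ℕ) (hN : 2 ≤ N) (v : Fin N → ℝ) (vmin : ℝ) (a : Fin N → Fin N)
    (i : Fin N) (h : a i ≠ i) :
    Tendsto (fun Δ => Fk N v vmin a i Δ / Δ) (nhdsWithin 0 (Set.Ioi 0))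
      (nhds ((v i - vmin) * 1 / N)) := by
  have hNne : (N:ℝ) ≠ 0 := by positivity
  have hE : Tendsto (fun Δ : ℝ => Real.exp (-(Δ * v (a i)))) (nhdsWithin 0 (Set.Ioi 0))
      (nhds 1) := (expTendsto' _).mono_left nhdsWithin_le_nhds
  have h2 := ((slopeTendsto' (v i) vmin).mul hE).div (sumTendsto N v) hNne
  refine h2.congr (fun Δ => ?_)
  simp only [Fk, if_neg h, Pi.div_apply]
  ring

private lemma keyLim (N : ℕ) (hN : 2 ≤ N) (v : Fin N → ℝ) (vmin : ℝ) (a : Fin N → Fin N)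
    (i : Fin N) (hi : a i ≠ i) :
    Tendsto (fun Δ => (∏ j, Fk N v vmin a j Δ) / Δ) (nhdsWithin 0 (Set.Ioi 0))
      (nhds ((v i - vmin) * 1 / N * ∏ j ∈ univ.erase i, (if a j = j then (1:ℝ) else 0))) := by
  have hprod := tendsto_finset_prod (univ.erase i) (fun j (_ : j ∈ univ.erase i) =>
    Fk_lim N hN v vmin a j)
  have h := (Fk_div N hN v vmin a i hi).mul hprod
  refine h.congr (fun Δ => ?_)
  rw [← Finset.mul_prod_erase univ _ (Finset.mem_univ i)]
  ring

private lemma Lsum (N : ℕ) (hN : 2 ≤ N) (v : Fin N → ℝ) (vmin : ℝ) :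
    ∑ a ∈ univ.filter (fun a : Fin N → Fin N => a ≠ id),
      (∑ i, if a i ≠ i then
        (v i - vmin) * 1 / N * ∏ j ∈ univ.erase i, (if a j = j then (1:ℝ) else 0) else 0)
    = ((N:ℝ) - 1) * ((∑ j, v j) / N - vmin) := by
  have hNne : (N:ℝ) ≠ 0 := by positivity
  have hid : (∑ i, if id i ≠ i then
      (v i - vmin) * 1 / N * ∏ j ∈ univ.erase i, (if id j = j then (1:ℝ) else 0) else 0) = 0 := by
    simp
  rw [Finset.filter_ne', Finset.sum_erase_eq_sub (Finset.mem_univ id), hid, sub_zero]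
  rw [Finset.sum_comm]
  have hinner : ∀ i : Fin N, (∑ a : Fin N → Fin N, if a i ≠ i then
      (v i - vmin) * 1 / N * ∏ j ∈ univ.erase i, (if a j = j then (1:ℝ) else 0) else 0)
      = (v i - vmin) * 1 / N * ((N:ℝ) - 1) := by
    intro i
    have hterm : ∀ a : Fin N → Fin N, (if a i ≠ i then
        (v i - vmin) * 1 / N * ∏ j ∈ univ.erase i, (if a j = j then (1:ℝ) else 0) else 0)
        = (v i - vmin) * 1 / N *
          ∏ j, (if j = i then (if a j = i then (0:ℝ) else 1) else (if a j = j then 1 else 0)) := by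
      intro a
      rw [← Finset.mul_prod_erase univ
        (fun j => if j = i then (if a j = i then (0:ℝ) else 1) else (if a j = j then 1 else 0))
        (Finset.mem_univ i)]
      have he : ∏ j ∈ univ.erase i,
          (if j = i then (if a j = i then (0:ℝ) else 1) else (if a j = j then 1 else 0))
          = ∏ j ∈ univ.erase i, (if a j = j then (1:ℝ) else 0) :=
        Finset.prod_congr rfl (fun j hj => by rw [if_neg (Finset.ne_of_mem_erase hj)])
      rw [he]
      by_cases h : a i = i <;> simp [h]
    rw [Finset.sum_congr rfl (fun a _ => hterm a), ← Finset.mul_sum]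
    congr 1
    have hfact : (∑ a : Fin N → Fin N, ∏ j,
        (if j = i then (if a j = i then (0:ℝ) else 1) else (if a j = j then 1 else 0)))
        = ∏ j, ∑ b : Fin N,
        (if j = i then (if b = i then (0:ℝ) else 1) else (if b = j then 1 else 0)) := by
      rw [Finset.prod_univ_sum, Fintype.piFinset_univ]
    rw [hfact]
    rw [← Finset.mul_prod_erase univ _ (Finset.mem_univ i)]
    have h1 : (∑ b : Fin N,
        (if i = i then (if b = i then (0:ℝ) else 1) else (if b = i then 1 else 0)))
        = (N:ℝ) - 1 := by
      simp only [eq_self_iff_true, ite_true]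
      have : ∀ b : Fin N, (if b = i then (0:ℝ) else 1) = 1 - (if b = i then 1 else 0) := by
        intro b; by_cases h : b = i <;> simp [h]
      rw [Finset.sum_congr rfl (fun b _ => this b), Finset.sum_sub_distrib]
      simp
    have h2 : ∏ j ∈ univ.erase i, (∑ b : Fin N,
        (if j = i then (if b = i then (0:ℝ) else 1) else (if b = j then 1 else 0))) = 1 := by
      refine Finset.prod_eq_one (fun j hj => ?_)
      simp only [if_neg (Finset.ne_of_mem_erase hj)]
      simp
    rw [h1, h2, mul_one]
  rw [Finset.sum_congr rfl (fun i _ => hinner i)]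
  have : ∀ i : Fin N, (v i - vmin) * 1 / N * ((N:ℝ) - 1)
      = ((N:ℝ)-1)/N * v i - ((N:ℝ)-1)/N * vmin := fun i => by ring
  rw [Finset.sum_congr rfl (fun i _ => this i), Finset.sum_sub_distrib, ← Finset.mul_sum,
    Finset.sum_const, Finset.card_univ, Fintype.card_fin]
  field_simp
  rw [nsmul_eq_mul]
  field_simp

/-- The limiting resampling intensity of killing resampling. -/
theorem stmt12 (N : ℕ) (hN : 2 ≤ N) (v : Fin N → ℝ) (hv : ∀ i, 0 ≤ v i)
    (vmin : ℝ) (hvmin : IsLeast (Set.range v) vmin)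
    (r : (Fin N → Fin N) → ℝ → ℝ)
    (hr : ∀ a Δ, r a Δ =
      ∏ i, ((if a i = i then Real.exp (-(Δ * v i)) / Real.exp (-(Δ * vmin)) else 0) +
        (1 - Real.exp (-(Δ * v i)) / Real.exp (-(Δ * vmin))) *
          Real.exp (-(Δ * v (a i))) / ∑ l, Real.exp (-(Δ * v l)))) :
    (∀ a : Fin N → Fin N, ∀ i : Fin N, a i ≠ i → (∀ j, j ≠ i → a j = j) →
      Filter.Tendsto (fun Δ => r a Δ / Δ) (nhdsWithin 0 (Set.Ioi 0))
        (nhds ((1 / (N : ℝ)) * (v i - vmin)))) ∧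
    (∀ a : Fin N → Fin N, (∃ i j, i ≠ j ∧ a i ≠ i ∧ a j ≠ j) →
      Filter.Tendsto (fun Δ => r a Δ / Δ) (nhdsWithin 0 (Set.Ioi 0)) (nhds 0)) ∧
    Filter.Tendsto
      (fun Δ => (∑ a ∈ Finset.univ.filter (fun a : Fin N → Fin N => a ≠ id), r a Δ) / Δ)
      (nhdsWithin 0 (Set.Ioi 0))
      (nhds (((N : ℝ) - 1) * ((∑ j, v j) / N - vmin))) := by
  have hrF : ∀ a Δ, r a Δ = ∏ j, Fk N v vmin a j Δ := hr
  refine ⟨?_, ?_, ?_⟩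
  · intro a i hi hfix
    have hp : (∏ j ∈ univ.erase i, if a j = j then (1:ℝ) else 0) = 1 :=
      Finset.prod_eq_one fun j hj => by rw [if_pos (hfix j (Finset.ne_of_mem_erase hj))]
    have hk := keyLim N hN v vmin a i hi
    rw [hp, mul_one] at hk
    have he : (1:ℝ)/N * (v i - vmin) = (v i - vmin) * 1 / N := by ring
    rw [he]
    exact hk.congr fun Δ => by rw [hrF]
  · rintro a ⟨i, j, hij, hi, hj⟩
    have hk := keyLim N hN v vmin a i hi
    have hp : (∏ k ∈ univ.erase i, if a k = k then (1:ℝ) else 0) = 0 :=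
      Finset.prod_eq_zero (Finset.mem_erase.mpr ⟨Ne.symm hij, Finset.mem_univ j⟩) (if_neg hj)
    rw [hp, mul_zero] at hk
    exact hk.congr fun Δ => by rw [hrF]
  · have key2 : ∀ a ∈ univ.filter (fun a : Fin N → Fin N => a ≠ id),
        Tendsto (fun Δ => r a Δ / Δ) (nhdsWithin 0 (Set.Ioi 0))
          (nhds (∑ i, if a i ≠ i then
            (v i - vmin) * 1 / N * ∏ j ∈ univ.erase i, (if a j = j then (1:ℝ) else 0)
            else 0)) := by
      intro a ha
      have hane : a ≠ id := (Finset.mem_filter.mp ha).2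
      obtain ⟨i, hi⟩ := Function.ne_iff.mp hane
      have hi' : a i ≠ i := hi
      have hk := keyLim N hN v vmin a i hi'
      have hEq : (∑ k, if a k ≠ k then
          (v k - vmin) * 1 / N * ∏ j ∈ univ.erase k, (if a j = j then (1:ℝ) else 0) else 0)
          = (v i - vmin) * 1 / N * ∏ j ∈ univ.erase i, (if a j = j then (1:ℝ) else 0) := by
        by_cases hfix : ∀ j, j ≠ i → a j = j
        · rw [Finset.sum_eq_single_of_mem i (Finset.mem_univ i)
            (fun j _ hj => if_neg (by simp [hfix j hj]))]
          rw [if_pos hi']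
        · push_neg at hfix
          obtain ⟨j, hji, hj⟩ := hfix
          have hp0 : (∏ k ∈ univ.erase i, if a k = k then (1:ℝ) else 0) = 0 :=
            Finset.prod_eq_zero (Finset.mem_erase.mpr ⟨hji, Finset.mem_univ j⟩) (if_neg hj)
          rw [hp0, mul_zero]
          refine Finset.sum_eq_zero fun k _ => ?_
          by_cases hk2 : a k = k
          · simp [hk2]
          · rw [if_pos hk2]
            refine mul_eq_zero_of_right _ ?_
            by_cases hki : k = i
            · subst hki
              exact Finset.prod_eq_zero (Finset.mem_erase.mpr ⟨hji, Finset.mem_univ j⟩)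
                (if_neg hj)
            · exact Finset.prod_eq_zero (Finset.mem_erase.mpr ⟨Ne.symm hki, Finset.mem_univ i⟩)
                (if_neg hi')
      rw [hEq]
      exact hk.congr fun Δ => by rw [hrF]
    have hfin := tendsto_finset_sum _ key2
    rw [Lsum N hN v vmin] at hfin
    refine hfin.congr fun Δ => ?_
    rw [Finset.sum_div]
end

section
/- Symmetrised systematic resampling is unbiased: suppose normalized weights w satisfy p := ∑ᵢ (N w i - 1)₊ ≤ 1. With probability 1-p output the identity; otherwise pick independently K with P(K=k) = (1 - N w k)₊/p and L with P(L=ℓ) = (N w ℓ - 1)₊/p and output [K→L]. Then for every j, the expected fraction of offspring equal to j is w j, i.e. (1/N) E[#{i : A i = j}] = w j. -/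
/-- Symmetrised systematic resampling is unbiased. -/
theorem stmt15 (N : ℕ) (hN : 2 ≤ N) (w : Fin N → ℝ) (hw : ∀ i, 0 ≤ w i)
    (hsum : ∑ i, w i = 1)
    (p : ℝ) (hp : p = ∑ i, max ((N : ℝ) * w i - 1) 0) (hp1 : p ≤ 1) :
    ∀ j : Fin N,
      (1 / (N : ℝ)) * ((1 - p) * 1 +
        ∑ k : Fin N, ∑ l : Fin N,
          max (1 - (N : ℝ) * w k) 0 * max ((N : ℝ) * w l - 1) 0 / p *
            (1 + (if j = l then (1 : ℝ) else 0) - (if j = k then (1 : ℝ) else 0))) =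
      w j := by
  intro j
  have hN0 : (N : ℝ) ≠ 0 := by positivity
  set a : Fin N → ℝ := fun k => max (1 - (N : ℝ) * w k) 0 with ha
  set b : Fin N → ℝ := fun l => max ((N : ℝ) * w l - 1) 0 with hb
  have key : ∀ i, a i - b i = 1 - (N : ℝ) * w i := by
    intro i
    have := max_zero_sub_max_neg_zero_eq_self (1 - (N : ℝ) * w i)
    simpa [a, b, neg_sub] using this
  have hB : ∑ l, b l = p := hp.symm
  have hA : ∑ k, a k = p := by
    have h1 : ∑ i, (a i - b i) = 0 := by
      rw [Finset.sum_congr rfl (fun i _ => key i)]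
      rw [Finset.sum_sub_distrib, ← Finset.mul_sum, hsum]
      simp
    rw [Finset.sum_sub_distrib, hB] at h1
    linarith
  have inner : ∀ k : Fin N,
      (∑ l, a k * b l / p *
        (1 + (if j = l then (1 : ℝ) else 0) - (if j = k then (1 : ℝ) else 0))) =
      a k * p / p + a k * b j / p - (if j = k then (1 : ℝ) else 0) * (a k * p / p) := by
    intro k
    have e : ∀ l : Fin N, a k * b l / p *
        (1 + (if j = l then (1 : ℝ) else 0) - (if j = k then (1 : ℝ) else 0)) =
        a k * b l / p + (if j = l then a k * b l / p else 0)
          - (if j = k then (1 : ℝ) else 0) * (a k * b l / p) := by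
      intro l
      split_ifs <;> ring
    rw [Finset.sum_congr rfl (fun l _ => e l)]
    have s1 : (∑ x : Fin N, a k * b x / p) = a k * p / p := by
      rw [← Finset.sum_div, ← Finset.mul_sum, hB]
    rw [Finset.sum_sub_distrib, Finset.sum_add_distrib, Finset.sum_ite_eq]
    simp only [Finset.mem_univ, if_true]
    rw [← Finset.mul_sum, s1]
  have houter : (∑ k : Fin N, ∑ l : Fin N, a k * b l / p *
        (1 + (if j = l then (1 : ℝ) else 0) - (if j = k then (1 : ℝ) else 0))) =
      p * p / p + p * b j / p - a j * p / p := by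
    rw [Finset.sum_congr rfl (fun k _ => inner k)]
    have s2 : (∑ x : Fin N, a x * p / p) = p * p / p := by
      rw [← Finset.sum_div, ← Finset.sum_mul, hA]
    have s3 : (∑ x : Fin N, a x * b j / p) = p * b j / p := by
      rw [← Finset.sum_div, ← Finset.sum_mul, hA]
    rw [Finset.sum_sub_distrib, Finset.sum_add_distrib]
    simp only [ite_mul, one_mul, zero_mul]
    rw [Finset.sum_ite_eq]
    simp only [Finset.mem_univ, if_true]
    rw [s2, s3]
  rw [houter]
  by_cases hp0 : p = 0
  -- p = 0 case
  · have hbz : ∀ i, b i = 0 := by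
      intro i
      have hnn : ∀ i ∈ Finset.univ, (0:ℝ) ≤ b i := fun i _ => le_max_right _ _
      have := (Finset.sum_eq_zero_iff_of_nonneg hnn).mp (hB.trans hp0) i (Finset.mem_univ i)
      exact this
    have haz : ∀ i, a i = 0 := by
      intro i
      have hnn : ∀ i ∈ Finset.univ, (0:ℝ) ≤ a i := fun i _ => le_max_right _ _
      exact (Finset.sum_eq_zero_iff_of_nonneg hnn).mp (hA.trans hp0) i (Finset.mem_univ i)
    have hw1 : (N : ℝ) * w j = 1 := by
      have := key j
      rw [haz j, hbz j] at this
      linarith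
    rw [hp0]
    field_simp
    simp only [zero_mul, zero_div, sub_zero, add_zero]
    linarith [hw1]
  · have hd : p / p = 1 := div_self hp0
    have hbj : b j - a j = (N : ℝ) * w j - 1 := by linarith [key j]
    have h1 : p * p / p = p := by rw [mul_div_assoc, hd, mul_one]
    have h2 : p * b j / p = b j := by rw [mul_comm, mul_div_assoc, hd, mul_one]
    have h3 : a j * p / p = a j := by rw [mul_div_assoc, hd, mul_one]
    rw [h1, h2, h3]
    field_simp
    linarith [hbj]
end

section
/- If a resampling scheme r on [N]^N satisfies the unbiasedness condition E[(1/N) ∑ᵢ 1(A i = j)] = g j / ∑ᵢ g i for all positive weight vectors g, and the limits ι(a,v) = lim_{Δ→0⁺} (1/Δ) r(a | exp(-Δ v)) exist for all a ≠ identity with uniform boundedness, then for all v : Fin N → [0,∞) and all i: ∑_{a ≠ id} ι(a, v) * (#{j : a j = i} - 1) = v̄ - v i, where v̄ is the mean of v. (Asymptotic unbiasedness follows from unbiasedness plus the generator assumption.) -/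
/-- Asymptotic unbiasedness follows from unbiasedness plus the generator
assumption. -/
theorem stmt16 (N : ℕ) (hN : 1 ≤ N)
    (r : (Fin N → ℝ) → (Fin N → Fin N) → ℝ)
    (hprob : ∀ g : Fin N → ℝ, (∀ i, 0 < g i) →
      (∀ a, 0 ≤ r g a) ∧ ∑ a : Fin N → Fin N, r g a = 1)
    (hunbiased : ∀ g : Fin N → ℝ, (∀ i, 0 < g i) → ∀ j : Fin N,
      (1 / (N : ℝ)) * ∑ a : Fin N → Fin N,
          r g a * ((Finset.univ.filter fun i => a i = j).card : ℝ) =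
        g j / ∑ i, g i)
    (ι : (Fin N → Fin N) → (Fin N → ℝ) → ℝ)
    (hgen : ∀ a : Fin N → Fin N, a ≠ id → ∀ v : Fin N → ℝ, (∀ i, 0 ≤ v i) →
      Filter.Tendsto (fun Δ : ℝ => r (fun i => Real.exp (-(Δ * v i))) a / Δ)
        (nhdsWithin 0 (Set.Ioi 0)) (nhds (ι a v)))
    (hbdd : ∀ vstar : ℝ, 0 < vstar → ∃ C : ℝ, ∀ v : Fin N → ℝ,
      (∀ i, v i ∈ Set.Icc 0 vstar) → ∀ Δ ∈ Set.Ioo (0 : ℝ) 1,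
        ∀ a : Fin N → Fin N, a ≠ id →
          r (fun i => Real.exp (-(Δ * v i))) a / Δ ≤ C) :
    ∀ v : Fin N → ℝ, (∀ i, 0 ≤ v i) → ∀ i : Fin N,
      ∑ a ∈ Finset.univ.filter (fun a : Fin N → Fin N => a ≠ id),
          ι a v * (((Finset.univ.filter fun j => a j = i).card : ℝ) - 1) =
        (∑ j, v j) / N - v i := by
  intro v hv i
  have hNpos : (0:ℝ) < N := by exact_mod_cast hN
  have hNne : (N:ℝ) ≠ 0 := ne_of_gt hNpos
  set c : (Fin N → Fin N) → ℝ := fun a => ((Finset.univ.filter fun j => a j = i).card : ℝ)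
    with hc
  have hcid : c id = 1 := by
    simp [hc, Finset.filter_eq']
  -- the prelimit function
  set F : ℝ → ℝ := fun Δ => ∑ a ∈ Finset.univ.filter (fun a : Fin N → Fin N => a ≠ id),
      (r (fun j => Real.exp (-(Δ * v j))) a / Δ) * (c a - 1) with hF
  -- F tends to the LHS
  have hlim1 : Filter.Tendsto F (nhdsWithin 0 (Set.Ioi 0))
      (nhds (∑ a ∈ Finset.univ.filter (fun a : Fin N → Fin N => a ≠ id),
        ι a v * (c a - 1))) := by
    apply tendsto_finset_sum
    intro a ha
    exact ((hgen a (Finset.mem_filter.mp ha).2 v hv).mul_const _)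
  -- the smooth function h
  set h : ℝ → ℝ := fun Δ => (N : ℝ) * Real.exp (-(Δ * v i)) / ∑ j, Real.exp (-(Δ * v j))
    with hh
  have hS0 : (∑ j : Fin N, Real.exp (-((0:ℝ) * v j))) = (N : ℝ) := by
    simp
  have hDS : HasDerivAt (fun Δ : ℝ => ∑ j, Real.exp (-(Δ * v j))) (-∑ j, v j) 0 := by
    have : HasDerivAt (fun Δ : ℝ => ∑ j, Real.exp (-(Δ * v j)))
        (∑ j, Real.exp (-((0:ℝ) * v j)) * (-(v j))) 0 := by
      apply HasDerivAt.fun_sum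
      intro j _
      have h1 : HasDerivAt (fun Δ : ℝ => -(Δ * v j)) (-(v j)) 0 := by
        simpa using ((hasDerivAt_id (0:ℝ)).mul_const (v j)).fun_neg
      exact h1.exp
    simpa [Finset.sum_neg_distrib] using this
  have hDn : HasDerivAt (fun Δ : ℝ => (N:ℝ) * Real.exp (-(Δ * v i))) (-((N:ℝ) * v i)) 0 := by
    have h1 : HasDerivAt (fun Δ : ℝ => -(Δ * v i)) (-(v i)) 0 := by
      simpa using ((hasDerivAt_id (0:ℝ)).mul_const (v i)).fun_neg
    have := (h1.exp).const_mul (N:ℝ)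
    simpa [mul_comm, mul_assoc, mul_left_comm] using this
  have hDh : HasDerivAt h ((∑ j, v j) / N - v i) 0 := by
    have := hDn.fun_div hDS (by rw [hS0]; exact hNne)
    refine this.congr_deriv ?_
    rw [hS0, zero_mul, neg_zero, Real.exp_zero]
    field_simp
    ring
  have hh0 : h 0 = 1 := by
    have h1 : h 0 = (N:ℝ) / (N:ℝ) := by simp [hh, hS0]
    rw [h1, div_self hNne]
  -- h slope limit
  have hlim2 : Filter.Tendsto (fun Δ : ℝ => (h Δ - 1) / Δ) (nhdsWithin 0 (Set.Ioi 0))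
      (nhds ((∑ j, v j) / N - v i)) := by
    have := hasDerivAt_iff_tendsto_slope.mp hDh
    have h2 := this.mono_left (nhdsWithin_mono 0 (by
      intro x hx
      exact ne_of_gt hx : Set.Ioi (0:ℝ) ⊆ {(0:ℝ)}ᶜ))
    refine h2.congr (fun Δ => ?_)
    simp [slope_def_field, hh0]
  -- F equals the slope on Ioi 0
  have heq : ∀ Δ : ℝ, Δ ∈ Set.Ioi (0:ℝ) → F Δ = (h Δ - 1) / Δ := by
    intro Δ hΔ
    have hΔne : Δ ≠ 0 := ne_of_gt hΔ
    set g : Fin N → ℝ := fun j => Real.exp (-(Δ * v j)) with hg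
    have hgpos : ∀ j, 0 < g j := fun j => Real.exp_pos _
    have hsum : ∑ a : Fin N → Fin N, r g a * c a = (N:ℝ) * (g i / ∑ j, g j) := by
      have h0 := hunbiased g hgpos i
      have h2 : (N:ℝ) * ((1/(N:ℝ)) * ∑ a : Fin N → Fin N, r g a * c a)
          = (N:ℝ) * (g i / ∑ j, g j) := by rw [h0]
      rw [← h2]
      field_simp
    have hfull : ∑ a : Fin N → Fin N, r g a * (c a - 1) = h Δ - 1 := by
      have h1 := (hprob g hgpos).2
      have : ∑ a : Fin N → Fin N, r g a * (c a - 1)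
          = (∑ a : Fin N → Fin N, r g a * c a) - ∑ a : Fin N → Fin N, r g a := by
        rw [← Finset.sum_sub_distrib]
        exact Finset.sum_congr rfl fun a _ => by ring
      rw [this, hsum, h1, hh, hg]
      ring_nf
    have hfilter : ∑ a ∈ Finset.univ.filter (fun a : Fin N → Fin N => a ≠ id),
        r g a * (c a - 1) = ∑ a : Fin N → Fin N, r g a * (c a - 1) := by
      apply Finset.sum_filter_of_ne
      intro a _ hne
      intro haid
      apply hne
      rw [haid, hcid]
      ring
    calc F Δ = (∑ a ∈ Finset.univ.filter (fun a : Fin N → Fin N => a ≠ id),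
        r g a * (c a - 1)) / Δ := by
          rw [hF, Finset.sum_div]
          exact Finset.sum_congr rfl fun a _ => by ring
      _ = (h Δ - 1) / Δ := by rw [hfilter, hfull]
  have heqev : F =ᶠ[nhdsWithin 0 (Set.Ioi 0)] (fun Δ => (h Δ - 1) / Δ) :=
    Filter.eventuallyEq_of_mem self_mem_nhdsWithin heq
  have hlim1' : Filter.Tendsto (fun Δ => (h Δ - 1) / Δ) (nhdsWithin 0 (Set.Ioi 0))
      (nhds (∑ a ∈ Finset.univ.filter (fun a : Fin N → Fin N => a ≠ id),
        ι a v * (c a - 1))) := hlim1.congr' heqev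
  exact tendsto_nhds_unique hlim1' hlim2
end

section
/- Key algebraic identity used in the proof of asymptotic unbiasedness: for any probability distribution r on index vectors a : Fin N → Fin N satisfying the unbiasedness condition with weights g i = exp(-Δ v i), one has ∑_{a ≠ id} r(a) * (#{j : a j = i} - 1) = (N exp(-Δ v i) - ∑_j exp(-Δ v j)) / ∑_j exp(-Δ v j), and lim_{Δ→0⁺} of the right-hand side divided by Δ equals v̄ - v i. -/
/-- Key algebraic identity in the proof of asymptotic unbiasedness, and the
limit of the right-hand side. -/
theorem stmt17 (N : ℕ) (hN : 1 ≤ N) (v : Fin N → ℝ) (hv : ∀ i, 0 ≤ v i)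
    (r : ℝ → (Fin N → Fin N) → ℝ)
    (hsum : ∀ Δ : ℝ, 0 < Δ → ∑ a : Fin N → Fin N, r Δ a = 1)
    (hub : ∀ Δ : ℝ, 0 < Δ → ∀ i : Fin N,
      ∑ a : Fin N → Fin N,
          r Δ a * ((Finset.univ.filter fun j => a j = i).card : ℝ) =
        (N : ℝ) * Real.exp (-(Δ * v i)) / ∑ j, Real.exp (-(Δ * v j))) :
    (∀ Δ : ℝ, 0 < Δ → ∀ i : Fin N,
      ∑ a ∈ Finset.univ.filter (fun a : Fin N → Fin N => a ≠ id),
          r Δ a * (((Finset.univ.filter fun j => a j = i).card : ℝ) - 1) =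
        ((N : ℝ) * Real.exp (-(Δ * v i)) - ∑ j, Real.exp (-(Δ * v j))) /
          ∑ j, Real.exp (-(Δ * v j))) ∧
    (∀ i : Fin N,
      Filter.Tendsto (fun Δ : ℝ =>
          (((N : ℝ) * Real.exp (-(Δ * v i)) - ∑ j, Real.exp (-(Δ * v j))) /
            ∑ j, Real.exp (-(Δ * v j))) / Δ)
        (nhdsWithin 0 (Set.Ioi 0)) (nhds ((∑ j, v j) / N - v i))) := by
  have hNpos : 0 < N := hN
  haveI : Nonempty (Fin N) := Fin.pos_iff_nonempty.mp hNpos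
  constructor
  · intro Δ hΔ i
    have hS : (0:ℝ) < ∑ j, Real.exp (-(Δ * v j)) :=
      Finset.sum_pos (fun j _ => Real.exp_pos _) Finset.univ_nonempty
    have hid : r Δ id * (((Finset.univ.filter fun j => id j = i).card : ℝ) - 1) = 0 := by
      have h2 : (Finset.univ.filter fun j => id j = i) = {i} := by
        ext j; simp [Function.id_def]
      rw [h2]; simp
    have hfilter : (Finset.univ.filter fun a : Fin N → Fin N => a ≠ id)
        = Finset.univ.erase id := by
      ext a; simp [Finset.mem_erase, and_comm]
    have herase := Finset.sum_erase (f := fun a : Fin N → Fin N => r Δ a *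
      (((Finset.univ.filter fun j => a j = i).card : ℝ) - 1)) Finset.univ hid
    rw [hfilter, herase]
    have := hub Δ hΔ i
    have h1 := hsum Δ hΔ
    rw [show (fun a : Fin N → Fin N => r Δ a *
        (((Finset.univ.filter fun j => a j = i).card : ℝ) - 1))
      = fun a => r Δ a * ((Finset.univ.filter fun j => a j = i).card : ℝ) - r Δ a by
        funext a; ring]
    rw [Finset.sum_sub_distrib, this, h1]
    field_simp
  · intro i
    set g : ℝ → ℝ := fun Δ => (N : ℝ) * Real.exp (-(Δ * v i)) - ∑ j, Real.exp (-(Δ * v j))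
      with hg
    have hg0 : g 0 = 0 := by simp [hg]
    have hderivj : ∀ j : Fin N, HasDerivAt (fun Δ : ℝ => Real.exp (-(Δ * v j))) (-(v j)) 0 := by
      intro j
      have h1 : HasDerivAt (fun Δ : ℝ => -(Δ * v j)) (-(v j)) 0 := by
        simpa using ((hasDerivAt_id (0:ℝ)).mul_const (v j)).fun_neg
      simpa using h1.exp
    have hderiv : HasDerivAt g (∑ j, v j - N * v i) 0 := by
      have hs : HasDerivAt (fun Δ : ℝ => ∑ j, Real.exp (-(Δ * v j)))
          (∑ j, -(v j)) 0 := HasDerivAt.fun_sum (fun j _ => hderivj j)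
      have := (((hderivj i).const_mul (N : ℝ)).fun_sub hs)
      refine this.congr_deriv ?_
      simp [Finset.sum_neg_distrib]
      ring
    have hslope : Filter.Tendsto (fun Δ : ℝ => g Δ / Δ)
        (nhdsWithin 0 (Set.Ioi 0)) (nhds (∑ j, v j - N * v i)) := by
      have h := hasDerivAt_iff_tendsto_slope.mp hderiv
      have h2 := h.mono_left (nhdsWithin_mono 0 (by
        intro x hx
        exact fun h0 => (ne_of_gt (Set.mem_Ioi.mp hx)) (by simpa using h0)))
      refine h2.congr fun Δ => ?_
      simp [slope_def_field, hg0]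
    have hScont : Filter.Tendsto (fun Δ : ℝ => ∑ j, Real.exp (-(Δ * v j)))
        (nhdsWithin 0 (Set.Ioi 0)) (nhds (N : ℝ)) := by
      have hc : Continuous (fun Δ : ℝ => ∑ j, Real.exp (-(Δ * v j))) := by
        continuity
      have := (hc.tendsto 0).mono_left (nhdsWithin_le_nhds (s := Set.Ioi 0))
      simpa using this
    have hN0 : (N : ℝ) ≠ 0 := by positivity
    have hmain := hslope.div hScont hN0
    have heq : ((∑ j, v j) / N - v i) = (∑ j, v j - N * v i) / N := by
      field_simp
    rw [heq]
    refine hmain.congr fun Δ => ?_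
    simp only [Pi.div_apply]
    ring
end
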